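/- Let α > 0 and let ℓ be a positive integer. Then there exists an integer n₀ = n₀(α, ℓ) such that every oriented graph G on n ≥ n₀ vertices with minimum semidegree δ⁰(G) ≥ αn contains every orientation C of a cycle of length at most ℓ whose cycle-type t(C) is 0 (i.e. C has equally many edges oriented forwards and backwards). -/

import Mathlib

/-- An oriented graph: a digraph (relation) with no loops and no pair of
antiparallel edges. -/
def IsOrientedGraph {V : Type*} (E : V → V → Prop) : Prop :=
  ∀ x y, E x y → ¬ E y x

/-- The outdegree `d⁺(x)` of a vertex. -/
noncomputable def outDeg {V : Type*} (E : V → V → Prop) (x : V) : ℕ :=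
  Nat.card {y // E x y}

/-- The indegree `d⁻(x)` of a vertex. -/
noncomputable def inDeg {V : Type*} (E : V → V → Prop) (x : V) : ℕ :=
  Nat.card {y // E y x}

/-- The minimum semidegree `δ⁰(G) = min over x of min (d⁺(x), d⁻(x))`. -/
noncomputable def minSemidegree {V : Type*} (E : V → V → Prop) : ℕ :=
  sInf (Set.range fun x => min (outDeg E x) (inDeg E x))

/-- The minimum outdegree `δ⁺(G)`. -/
noncomputable def minOutdegree {V : Type*} (E : V → V → Prop) : ℕ :=
  sInf (Set.range fun x => outDeg E x)

/-- `G` contains a directed cycle of length `ℓ`: distinct vertices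
`v₀, …, v_{ℓ-1}` (indexed cyclically) with all consecutive edges present. -/
def HasCycle {V : Type*} (E : V → V → Prop) (ℓ : ℕ) : Prop :=
  ∃ v : ZMod ℓ → V, Function.Injective v ∧ ∀ i, E (v i) (v (i + 1))

/-- `G` contains a directed `ℓ`-cycle through the vertex `u`. -/
def HasCycleThrough {V : Type*} (E : V → V → Prop) (ℓ : ℕ) (u : V) : Prop :=
  ∃ v : ZMod ℓ → V, Function.Injective v ∧ (∀ i, E (v i) (v (i + 1))) ∧ ∃ i, v i = u

/-- `G` contains the orientation of an `ℓ`-cycle described by `c`: `c i = true`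
means the edge between positions `i` and `i+1` is directed forwards. -/
def ContainsOrientation {V : Type*} (E : V → V → Prop) (ℓ : ℕ) (c : ZMod ℓ → Bool) : Prop :=
  ∃ v : ZMod ℓ → V, Function.Injective v ∧
    ∀ i, if c i then E (v i) (v (i + 1)) else E (v (i + 1)) (v i)

/-!
A balanced orientation `c` of an `m`-cycle maps homomorphically onto a directed path: the height
of position `i` (forward minus backward edges before `i`, shifted by `m`) lies in `[0, 2m)`.
Hence it suffices to find in `G` a blow-up of a directed path on `2m` vertices with parts of
size `m`, every part completely joined to the next; Hall's condition then holds trivially and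
yields an injective choice of representatives, i.e. a copy of `c`.

If every outdegree is at least `n / K`, then every set `S` of `2Km` vertices contains an
`m`-set `A` with at least `n / (2K·C(2Km, m))` common out-neighbours: double counting the edges
leaving `S` gives `n / (2K)` vertices with `m` in-neighbours in `S`, and pigeonholing them by an
`m`-set of such in-neighbours gives `A`. The common out-neighbourhood is again large, so the
blow-up is built one part at a time.
-/

open Finset

theorem outDeg_eq_card {V : Type*} [Fintype V] (E : V → V → Prop) [DecidableRel E] (x : V) :
    outDeg E x = #{y | E x y} := by
  rw [outDeg, Nat.card_eq_fintype_card, Fintype.card_subtype]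

theorem minSemidegree_le_outDeg {V : Type*} (E : V → V → Prop) (x : V) :
    minSemidegree E ≤ outDeg E x :=
  (Nat.sInf_le (Set.mem_range_self x)).trans (min_le_left _ _)

theorem card_le_mul_outDeg {V : Type*} [Fintype V] {E : V → V → Prop} {α : ℝ} {K : ℕ}
    (hK : 1 ≤ α * K) (hδ : α * Fintype.card V ≤ minSemidegree E) (x : V) :
    Fintype.card V ≤ K * outDeg E x := by
  have hn : (0 : ℝ) ≤ Fintype.card V := Nat.cast_nonneg _
  have hδx : (minSemidegree E : ℝ) ≤ outDeg E x := by
    exact_mod_cast minSemidegree_le_outDeg E x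
  have : (Fintype.card V : ℝ) ≤ K * outDeg E x := by
    calc (Fintype.card V : ℝ) ≤ α * K * Fintype.card V := le_mul_of_one_le_left hn hK
      _ = K * (α * Fintype.card V) := by ring
      _ ≤ K * outDeg E x := mul_le_mul_of_nonneg_left (hδ.trans hδx) (Nat.cast_nonneg K)
  exact_mod_cast this

section PathBlowup

variable {V : Type*} {E : V → V → Prop}

def IsPathBlowup (E : V → V → Prop) (A : ℕ → Finset V) (k : ℕ) : Prop :=
  ∀ j < k, ∀ u ∈ A j, ∀ w ∈ A (j + 1), E u w

variable [Fintype V] [DecidableEq V] [DecidableRel E]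

theorem exists_subset_with_large_common_outNbhd {K m : ℕ} (hK : 0 < K) (hm : 0 < m)
    (hdeg : ∀ x, Fintype.card V ≤ K * #{y | E x y}) {S : Finset V} (hS : 2 * K * m ≤ #S) :
    ∃ A ⊆ S, #A = m ∧ ∃ T : Finset V, (∀ u ∈ A, ∀ w ∈ T, E u w) ∧
      Fintype.card V ≤ 2 * K * (2 * K * m).choose m * #T := by
  obtain ⟨S', hS'S, hS'card⟩ := exists_subset_card_eq hS
  set n := Fintype.card V
  set B : Finset V := {w | m ≤ #(S'.bipartiteBelow E w)}
  have hB : n ≤ 2 * K * #B := by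
    have hsum : 2 * K * m * n ≤ K * ∑ w, #(S'.bipartiteBelow E w) := by
      rw [← sum_card_bipartiteAbove_eq_sum_card_bipartiteBelow, mul_sum, ← hS'card,
        ← smul_eq_mul, ← sum_const]
      exact sum_le_sum fun u _ => hdeg u
    -- a vertex of `B` receives at most `#S'` edges from `S'`, any other vertex fewer than `m`
    have hsplit : ∑ w, #(S'.bipartiteBelow E w) ≤ #B * (2 * K * m) + n * m := by
      calc ∑ w, #(S'.bipartiteBelow E w)
          ≤ ∑ w, ((if w ∈ B then 2 * K * m else 0) + m) := by
            refine sum_le_sum fun w _ => ?_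
            split_ifs with hw
            · exact le_add_right (hS'card ▸ card_le_card (filter_subset _ _))
            · simp only [B, mem_filter, mem_univ, true_and, not_le] at hw
              omega
        _ = #B * (2 * K * m) + n * m := by
            rw [sum_add_distrib, sum_ite_mem, univ_inter, sum_const, sum_const, smul_eq_mul,
              smul_eq_mul, card_univ]
    have h := hsum.trans (Nat.mul_le_mul_left K hsplit)
    refine Nat.le_of_mul_le_mul_left ?_ (Nat.mul_pos hK hm)
    nlinarith
  have hf : ∀ w ∈ B, ∃ A ∈ S'.powersetCard m, A ⊆ S'.bipartiteBelow E w := fun w hw => by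
    obtain ⟨A, hA, hAcard⟩ := exists_subset_card_eq (mem_filter.1 hw).2
    exact ⟨A, mem_powersetCard.2 ⟨hA.trans (filter_subset _ _), hAcard⟩, hA⟩
  choose! f hfmem hfsub using hf
  obtain ⟨A, hA, hAmax⟩ := exists_max_image (S'.powersetCard m) (fun A => #{w ∈ B | f w = A})
    (powersetCard_nonempty.2 (by rw [hS'card]; exact Nat.le_mul_of_pos_left m (by omega)))
  have hfibre : #B ≤ (2 * K * m).choose m * #{w ∈ B | f w = A} := by
    rw [card_eq_sum_card_fiberwise hfmem, ← hS'card, ← card_powersetCard, ← smul_eq_mul]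
    exact sum_le_card_nsmul _ _ _ hAmax
  refine ⟨A, (mem_powersetCard.1 hA).1.trans hS'S, (mem_powersetCard.1 hA).2,
    {w ∈ B | f w = A}, fun u hu w hw => ?_, ?_⟩
  · obtain ⟨hwB, rfl⟩ := mem_filter.1 hw
    exact (mem_filter.1 (hfsub w hwB hu)).2
  · calc n ≤ 2 * K * #B := hB
      _ ≤ 2 * K * ((2 * K * m).choose m * #{w ∈ B | f w = A}) := Nat.mul_le_mul_left _ hfibre
      _ = _ := (mul_assoc _ _ _).symm

def pathBlowupThreshold (K m : ℕ) : ℕ := 2 * K * m * (2 * K * (2 * K * m).choose m)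

theorem exists_isPathBlowup {K m : ℕ} (hK : 0 < K) (hm : 0 < m)
    (hdeg : ∀ x, Fintype.card V ≤ K * #{y | E x y})
    (hn : pathBlowupThreshold K m ≤ Fintype.card V) (k : ℕ) :
    ∃ A : ℕ → Finset V,
      (∀ j < k, #(A j) = m) ∧ 2 * K * m ≤ #(A k) ∧ IsPathBlowup E A k := by
  have hD : 0 < 2 * K * (2 * K * m).choose m :=
    Nat.mul_pos (by omega) (Nat.choose_pos (Nat.le_mul_of_pos_left m (by omega)))
  induction k with
  | zero =>
    exact ⟨fun _ => univ, by simp, (Nat.le_mul_of_pos_right _ hD).trans hn,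
      by simp [IsPathBlowup]⟩
  | succ k ih =>
    obtain ⟨A, hAcard, hAk, hA⟩ := ih
    obtain ⟨A', hA'Ak, hA'card, T, hA'T, hT⟩ :=
      exists_subset_with_large_common_outNbhd hK hm hdeg hAk
    refine ⟨fun j => if j < k then A j else if j = k then A' else T, fun j hj => ?_, ?_,
      fun j hj u hu w hw => ?_⟩
    · dsimp only
      split_ifs with h₁ h₂
      exacts [hAcard j h₁, hA'card, by omega]
    · simp only [show ¬k + 1 < k by omega, show k + 1 ≠ k by omega, if_false]
      exact Nat.le_of_mul_le_mul_right (hn.trans (hT.trans_eq (mul_comm _ _))) hD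
    · simp only at hu hw
      split_ifs at hu hw with h₁ h₂ h₃ <;> first | omega | skip
      · exact hA j h₁ u hu w hw
      · exact hA j h₁ u hu w (h₃ ▸ hA'Ak hw)
      · exact hA'T u hu w hw

end PathBlowup

theorem exists_injective_mem_of_card_le {ι α : Type*} [Fintype ι] (A : ι → Finset α)
    (hA : ∀ i, Fintype.card ι ≤ #(A i)) :
    ∃ f : ι → α, Function.Injective f ∧ ∀ i, f i ∈ A i := by
  classical
  refine (all_card_le_biUnion_card_iff_exists_injective A).1 fun s => ?_
  rcases s.eq_empty_or_nonempty with rfl | ⟨i, hi⟩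
  · simp
  · exact (card_le_univ s).trans ((hA i).trans (card_le_card (subset_biUnion_of_mem A hi)))

theorem sum_range_natCast_eq_sum {M : Type*} [AddCommMonoid M] {m : ℕ} [NeZero m]
    (f : ZMod m → M) : ∑ t ∈ range m, f t = ∑ i, f i :=
  sum_bij' (fun t _ => (t : ZMod m)) (fun i _ => i.val) (by simp) (by simp [ZMod.val_lt])
    (fun t ht => ZMod.val_cast_of_lt (mem_range.1 ht)) (fun i _ => ZMod.natCast_zmod_val i)
    (fun _ _ => rfl)

def IsPathHom {m : ℕ} (c : ZMod m → Bool) (h : ZMod m → ℕ) : Prop :=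
  ∀ i, if c i then h (i + 1) = h i + 1 else h i = h (i + 1) + 1

theorem exists_isPathHom_of_balanced {m : ℕ} [NeZero m] {c : ZMod m → Bool}
    (hc : Nat.card {i // c i = true} = Nat.card {i // c i = false}) :
    ∃ h : ZMod m → ℕ, IsPathHom c h ∧ ∀ i, h i < 2 * m := by
  set ε : ZMod m → ℤ := fun i => if c i then 1 else -1
  have hε : ∑ i, ε i = 0 := by
    simp only [Nat.card_eq_fintype_card, Fintype.card_subtype] at hc
    simp [ε, sum_ite, hc]
  set p : ℕ → ℤ := fun j => ∑ t ∈ range j, ε t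
  have hp_succ (j : ℕ) : p (j + 1) = p j + ε j := sum_range_succ _ _
  have hp_m : p m = 0 := (sum_range_natCast_eq_sum ε).trans hε
  have hp_periodic : Function.Periodic p m := fun j => by
    change ∑ t ∈ range (j + m), ε t = p j
    rw [add_comm, sum_range_add]
    simp only [Nat.cast_add, ZMod.natCast_self, zero_add]
    exact (congrArg (· + p j) hp_m).trans (zero_add _)
  have hp_bound (j : ℕ) : -(j : ℤ) ≤ p j ∧ p j ≤ j := by
    induction j with
    | zero => simp [p]
    | succ j ih => rw [hp_succ]; simp only [ε]; split_ifs <;> push_cast <;> omega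
  have hp_val (i : ZMod m) : p (i + 1).val = p i.val + ε i := by
    rw [ZMod.val_add, ZMod.val_one_eq_one_mod, Nat.add_mod_mod, hp_periodic.map_mod_nat, hp_succ,
      ZMod.natCast_zmod_val]
  refine ⟨fun i => (p i.val + m).toNat, fun i => ?_, fun i => ?_⟩
  · have := hp_val i
    have := hp_bound i.val
    have := hp_bound (i + 1).val
    have := ZMod.val_lt i
    have := ZMod.val_lt (i + 1)
    simp only [ε] at *
    split_ifs at * <;> omega
  · have := hp_bound i.val
    have := ZMod.val_lt i
    dsimp only
    omega

theorem ContainsOrientation.of_isPathHom_of_isPathBlowup {V : Type*} {E : V → V → Prop}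
    {m k : ℕ} [NeZero m] {c : ZMod m → Bool} {h : ZMod m → ℕ} (hc : IsPathHom c h)
    (hhk : ∀ i, h i < k) {A : ℕ → Finset V} (hAcard : ∀ j < k, #(A j) = m)
    (hA : IsPathBlowup E A k) : ContainsOrientation E m c := by
  obtain ⟨f, hf, hfA⟩ := exists_injective_mem_of_card_le (fun i => A (h i))
    fun i => by rw [ZMod.card, hAcard _ (hhk i)]
  refine ⟨f, hf, fun i => ?_⟩
  have hci := hc i
  split_ifs at hci ⊢
  · exact hA _ (hhk i) _ (hfA i) _ (hci ▸ hfA (i + 1))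
  · exact hA _ (hhk (i + 1)) _ (hfA (i + 1)) _ (hci ▸ hfA i)

theorem cycle_type_zero_general (α : ℝ) (hα : 0 < α) (ℓ : ℕ) :
    ∃ n₀ : ℕ, ∀ (V : Type) [Fintype V] (E : V → V → Prop), IsOrientedGraph E →
      n₀ ≤ Fintype.card V →
      α * Fintype.card V ≤ (minSemidegree E : ℝ) →
      ∀ m, 3 ≤ m → m ≤ ℓ → ∀ c : ZMod m → Bool,
        Nat.card {i : ZMod m // c i = true} = Nat.card {i : ZMod m // c i = false} →
        ContainsOrientation E m c := by
  classical
  set K := ⌈α⁻¹⌉₊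
  have hK : 0 < K := Nat.ceil_pos.2 (inv_pos.2 hα)
  have hαK : 1 ≤ α * K := by
    rw [← mul_inv_cancel₀ hα.ne']
    exact mul_le_mul_of_nonneg_left (Nat.le_ceil _) hα.le
  refine ⟨(range (ℓ + 1)).sup (pathBlowupThreshold K),
    fun V _ E _ hn hδ m hm3 hmℓ c hc => ?_⟩
  have : NeZero m := ⟨by omega⟩
  have hdeg (x : V) : Fintype.card V ≤ K * #{y | E x y} :=
    outDeg_eq_card E x ▸ card_le_mul_outDeg hαK hδ x
  obtain ⟨h, hh, hhm⟩ := exists_isPathHom_of_balanced hc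
  obtain ⟨A, hAcard, -, hA⟩ := exists_isPathBlowup hK (by omega : 0 < m) hdeg
    ((le_sup (mem_range.2 (by omega))).trans hn) (2 * m)
  exact .of_isPathHom_of_isPathBlowup hh hhm hAcard hA

theorem cycle_type_zero (α : ℝ) (hα : 0 < α) (ℓ : ℕ) (hℓ : 0 < ℓ) :
    ∃ n₀ : ℕ, ∀ (V : Type) [Fintype V] (E : V → V → Prop), IsOrientedGraph E →
      n₀ ≤ Fintype.card V →
      α * Fintype.card V ≤ (minSemidegree E : ℝ) →
      ∀ m, 3 ≤ m → m ≤ ℓ → ∀ c : ZMod m → Bool,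
        Nat.card {i : ZMod m // c i = true} = Nat.card {i : ZMod m // c i = false} →
        ContainsOrientation E m c :=
  cycle_type_zero_general α hα ℓ
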